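/- Cross ratio of the hyperbolic Gauss maps along a face: if F_j = F_i W_{ij} with W_{ij} = (1/√(1-t a_{ij}))[[1, dg_{ij}],[t a_{ij}/dg_{ij}, 1]] and h^± = F e^± (e⁺ = (1,0)ᵀ, e⁻ = (0,1)ᵀ), then on a face (ijkl) the cross ratio of ⟨h^±⟩ equals (a_{ij}/(1 - t a_{ij})) · ((1 - t a_{jk})/a_{jk}), computed as cr = [det(e^±, W_{ij} e^±)/det(e^±, W_{jk} e^±)] · [det(W_{lk} e^±, e^±)/det(W_{il} e^±, e^±)] under the edge-labelling conditions a_{ij} = a_{kl}, a_{jk} = a_{li}. -/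

import Mathlib

open Matrix

/-- The Weierstrass transition matrix `W(dg,c) = (1-tc)^{-1/2} [[1, dg],[tc/dg, 1]]`. -/
noncomputable def Wmat (t c : ℝ) (dg : ℂ) : Matrix (Fin 2) (Fin 2) ℂ :=
  ((Real.sqrt (1 - t * c) : ℂ))⁻¹ • !![1, dg; ((t * c : ℝ) : ℂ) / dg, 1]

/-- `det(u,v)`: the determinant of the 2×2 matrix with columns `u`, `v`. -/
def det2 (u v : Fin 2 → ℂ) : ℂ := u 0 * v 1 - u 1 * v 0

/-- Cross ratio of the hyperbolic Gauss maps `h^± = F e^±` along a face `(ijkl)`: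
with edge-labels `a = a_{ij} = a_{kl}`, `b = a_{jk} = a_{li}` and the cross ratio
(holomorphicity) condition on `g`, both cross ratios equal
`(a/(1-ta))·((1-tb)/b)`. -/
theorem stmt16 (t a b : ℝ) (ht : t ≠ 0) (ha : 1 - t * a > 0) (hb : 1 - t * b > 0)
    (ha0 : a ≠ 0) (hb0 : b ≠ 0)
    (dgij dgjk dgkl dgli : ℂ)
    (hij : dgij ≠ 0) (hjk : dgjk ≠ 0) (hkl : dgkl ≠ 0) (hli : dgli ≠ 0)
    (hcr : (dgij / dgjk) * (dgkl / dgli) = (a : ℂ) / (b : ℂ)) :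
    (det2 ![1, 0] (Wmat t a dgij *ᵥ ![1, 0]) / det2 ![1, 0] (Wmat t b dgjk *ᵥ ![1, 0]))
        * (det2 (Wmat t a (-dgkl) *ᵥ ![1, 0]) ![1, 0]
          / det2 (Wmat t b (-dgli) *ᵥ ![1, 0]) ![1, 0])
      = ((a : ℂ) / (1 - (t : ℂ) * a)) * ((1 - (t : ℂ) * b) / (b : ℂ)) ∧
    (det2 ![0, 1] (Wmat t a dgij *ᵥ ![0, 1]) / det2 ![0, 1] (Wmat t b dgjk *ᵥ ![0, 1]))
        * (det2 (Wmat t a (-dgkl) *ᵥ ![0, 1]) ![0, 1]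
          / det2 (Wmat t b (-dgli) *ᵥ ![0, 1]) ![0, 1])
      = ((a : ℂ) / (1 - (t : ℂ) * a)) * ((1 - (t : ℂ) * b) / (b : ℂ)) := by
  have hsa2 : ((Real.sqrt (1 - t * a) : ℝ) : ℂ) ^ 2 = 1 - (t:ℂ) * a := by
    rw [← Complex.ofReal_pow, Real.sq_sqrt ha.le]; push_cast; ring
  have hsb2 : ((Real.sqrt (1 - t * b) : ℝ) : ℂ) ^ 2 = 1 - (t:ℂ) * b := by
    rw [← Complex.ofReal_pow, Real.sq_sqrt hb.le]; push_cast; ring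
  have hsa : ((Real.sqrt (1 - t * a) : ℝ) : ℂ) ≠ 0 := by
    simpa using (Real.sqrt_pos.mpr ha).ne'
  have hsb : ((Real.sqrt (1 - t * b) : ℝ) : ℂ) ≠ 0 := by
    simpa using (Real.sqrt_pos.mpr hb).ne'
  have ha0' : (a:ℂ) ≠ 0 := by exact_mod_cast ha0
  have hb0' : (b:ℂ) ≠ 0 := by exact_mod_cast hb0
  have ht' : (t:ℂ) ≠ 0 := by exact_mod_cast ht
  have hta : 1 - (t:ℂ) * a ≠ 0 := by rw [← hsa2]; exact pow_ne_zero 2 hsa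
  have htb : 1 - (t:ℂ) * b ≠ 0 := by rw [← hsb2]; exact pow_ne_zero 2 hsb
  have hcr' : (b:ℂ) * (dgij * dgkl) = (a:ℂ) * (dgjk * dgli) := by
    field_simp at hcr; linear_combination hcr
  refine ⟨?_, ?_⟩ <;>
    simp only [Wmat, det2, mulVec, dotProduct, Fin.sum_univ_two, Matrix.smul_apply,
      Matrix.cons_val', Matrix.cons_val_zero, Matrix.cons_val_one, Matrix.head_cons,
      Matrix.head_fin_const, Matrix.empty_val', Matrix.cons_val_fin_one, smul_eq_mul, Matrix.of_apply] <;>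
    push_cast <;> field_simp
  · linear_combination ((t:ℂ)^2*a^2*dgjk*dgli*(1-(t:ℂ)*a)*b) * hsb2
      - ((a:ℂ)*(1-(t:ℂ)*b)*dgij*dgkl*(t:ℂ)^2*b^2) * hsa2
      - ((t:ℂ)^2*a*b*(1-(t:ℂ)*a)*(1-(t:ℂ)*b)) * hcr'
  · linear_combination (dgij*dgjk*dgkl*dgli) * ((dgij*dgkl*(1-(t:ℂ)*a)*(b:ℂ)) * hsb2
      - ((a:ℂ)*(1-(t:ℂ)*b)*dgjk*dgli) * hsa2
      + ((1-(t:ℂ)*a)*(1-(t:ℂ)*b)) * hcr')
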